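/- Let (R, ∘_λ) be an r-dimensional right Novikov conformal superalgebra and define a ∗_λ b = a ∘_λ b + (−1)^{αβ} b ∘_{−λ−T} a for homogeneous a ∈ R_α, b ∈ R_β. Then for all homogeneous a, b, c with a of parity α and b of parity β: a ∗_λ (b ∗_μ c) + 2(a ∘_λ b) ∗_{λ+μ} c − (a ∗_λ b) ∗_{λ+μ} c − (−1)^{αβ} b ∗_μ (a ∗_λ c) = 0. -/

import Mathlib

open Finsupp MvPolynomial
open scoped TensorProduct

namespace CA

noncomputable section

variable (r : ℕ) (R : Type*) [AddCommGroup R] [Module ℂ R]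
  [Module (MvPolynomial (Fin r) ℂ) R] [IsScalarTower ℂ (MvPolynomial (Fin r) ℂ) R]

/-- Polynomials in `r` variables (the `λ`'s) with coefficients in `R`,
encoded via exponent multi-indices. -/
abbrev VP : Type _ := (Fin r →₀ ℕ) →₀ R

/-- Polynomials in two families of `r` variables (`λ`'s = `Sum.inl`, `μ`'s = `Sum.inr`)
with coefficients in `R`. -/
abbrev BP : Type _ := ((Fin r ⊕ Fin r) →₀ ℕ) →₀ R

/-- The action of `T i` on `R`, as a `ℂ`-linear endomorphism. -/
def tAct (i : Fin r) : R →ₗ[ℂ] R where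
  toFun v := (X i : MvPolynomial (Fin r) ℂ) • v
  map_add' u v := smul_add _ u v
  map_smul' c v := by
    simp only [RingHom.id_apply]
    rw [← algebraMap_smul (MvPolynomial (Fin r) ℂ) c v, ← mul_smul, mul_comm, mul_smul,
      algebraMap_smul]

/-- Multiplication by the variable `λ i` on `VP`. -/
def vLam (i : Fin r) : Module.End ℂ (VP r R) :=
  Finsupp.lmapDomain R ℂ (· + Finsupp.single i 1)

/-- The action of `T i` on the coefficients of an element of `VP`. -/
def vT (i : Fin r) : Module.End ℂ (VP r R) :=
  Finsupp.mapRange.linearMap (tAct r R i)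

/-- The substitution `λ ↦ -λ - T` on `VP`. -/
def vNeg (F : VP r R) : VP r R :=
  F.sum fun k v =>
    ((List.ofFn fun i : Fin r => (-(vLam r R i) - vT r R i) ^ (k i)).prod)
      (Finsupp.single 0 v)

/-- Multiplication by the monomial with exponent `e` on `BP`. -/
def bShift (e : (Fin r ⊕ Fin r) →₀ ℕ) : Module.End ℂ (BP r R) :=
  Finsupp.lmapDomain R ℂ (· + e)

/-- Multiplication by `λ i` on `BP`. -/
def bLam (i : Fin r) : Module.End ℂ (BP r R) := bShift r R (Finsupp.single (Sum.inl i) 1)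

/-- Multiplication by `μ i` on `BP`. -/
def bMu (i : Fin r) : Module.End ℂ (BP r R) := bShift r R (Finsupp.single (Sum.inr i) 1)

/-- The action of `T i` on the coefficients of an element of `BP`. -/
def bT (i : Fin r) : Module.End ℂ (BP r R) :=
  Finsupp.mapRange.linearMap (tAct r R i)

/-- Evaluation of an element of `VP` at a (commuting) family `s` of operators on `BP`:
`Σ_k λ^k v_k ↦ Σ_k s^k (v_k)`. -/
def ev (s : Fin r → Module.End ℂ (BP r R)) (F : VP r R) : BP r R :=
  F.sum fun k v => ((List.ofFn fun i : Fin r => (s i) ^ (k i)).prod) (Finsupp.single 0 v)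

/-- Extension of a `λ`-product `p` to a polynomial first argument, evaluated at the
family of operators `s`:  `(Σ_e x^e v_e)_s b = Σ_e x^e · (p v_e b)(s)`. -/
def evL (p : R → R → VP r R) (s : Fin r → Module.End ℂ (BP r R)) (F : BP r R) (b : R) :
    BP r R :=
  F.sum fun e v => bShift r R e (ev r R s (p v b))

/-- Extension of a `λ`-product `p` to a polynomial second argument, evaluated at the
family of operators `s`:  `a_s (Σ_e x^e w_e) = Σ_e x^e · (p a w_e)(s)`. -/
def evR (p : R → R → VP r R) (s : Fin r → Module.End ℂ (BP r R)) (a : R) (G : BP r R) :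
    BP r R :=
  G.sum fun e w => bShift r R e (ev r R s (p a w))

/-- The family `λ`. -/
def FL : Fin r → Module.End ℂ (BP r R) := fun i => bLam r R i
/-- The family `μ`. -/
def FM : Fin r → Module.End ℂ (BP r R) := fun i => bMu r R i
/-- The family `λ + μ`. -/
def FLM : Fin r → Module.End ℂ (BP r R) := fun i => bLam r R i + bMu r R i
/-- The family `-λ - T`. -/
def FNL : Fin r → Module.End ℂ (BP r R) := fun i => -(bLam r R i) - bT r R i
/-- The family `-μ - T`. -/
def FNM : Fin r → Module.End ℂ (BP r R) := fun i => -(bMu r R i) - bT r R i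
/-- The family `-λ - μ - T`. -/
def FNLM : Fin r → Module.End ℂ (BP r R) := fun i => -(bLam r R i) - bMu r R i - bT r R i

/-- The sign `(-1)^(αβ)` for parities `α β : ZMod 2`. -/
def sgn (α β : ZMod 2) : ℤ := (-1) ^ (α.val * β.val)

/-- `ℂ`-bilinearity of a `λ`-product. -/
def Bilin (p : R → R → VP r R) : Prop :=
  (∀ a b c : R, p (a + b) c = p a c + p b c) ∧
  (∀ a b c : R, p a (b + c) = p a b + p a c) ∧
  (∀ (z : ℂ) (a b : R), p (z • a) b = z • p a b) ∧
  (∀ (z : ℂ) (a b : R), p a (z • b) = z • p a b)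

/-- A `λ`-product is parity-preserving w.r.t. a grading `G`. -/
def ParityPres (G : ZMod 2 → Submodule ℂ R) (p : R → R → VP r R) : Prop :=
  ∀ (α β : ZMod 2) (a b : R), a ∈ G α → b ∈ G β → ∀ k, p a b k ∈ G (α + β)

/-- Conformal sesquilinearity: `(T_i a)_λ b = -λ_i (a_λ b)` and
`a_λ (T_i b) = (T_i + λ_i)(a_λ b)`. -/
def Sesq (p : R → R → VP r R) : Prop :=
  ∀ (i : Fin r) (a b : R),
    p ((X i : MvPolynomial (Fin r) ℂ) • a) b = (-(vLam r R i)) (p a b) ∧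
    p a ((X i : MvPolynomial (Fin r) ℂ) • b) = (vT r R i + vLam r R i) (p a b)

/-- `G` is a `ℤ/2ℤ`-grading of the `ℂ[T]`-module `R`. -/
def IsGraded (G : ZMod 2 → Submodule ℂ R) : Prop :=
  DirectSum.IsInternal G ∧
  ∀ (i : Fin r) (α : ZMod 2) (v : R), v ∈ G α →
    (X i : MvPolynomial (Fin r) ℂ) • v ∈ G α

/-- Conformal skew-symmetry `[a_λ b] = -(-1)^{αβ} [b_{-λ-T} a]`. -/
def Skew (G : ZMod 2 → Submodule ℂ R) (q : R → R → VP r R) : Prop :=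
  ∀ (α β : ZMod 2) (a b : R), a ∈ G α → b ∈ G β →
    q a b = -(sgn α β • vNeg r R (q b a))

/-- Conformal Jacobi identity
`[a_λ [b_μ c]] = [[a_λ b]_{λ+μ} c] + (-1)^{αβ} [b_μ [a_λ c]]`. -/
def Jacobi (G : ZMod 2 → Submodule ℂ R) (q : R → R → VP r R) : Prop :=
  ∀ (α β : ZMod 2) (a b c : R), a ∈ G α → b ∈ G β →
    evR r R q (FL r R) a (ev r R (FM r R) (q b c)) =
      evL r R q (FLM r R) (ev r R (FL r R) (q a b)) c +
      sgn α β • evR r R q (FM r R) b (ev r R (FL r R) (q a c))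

/-- `q` is an `r`-dimensional Lie conformal superalgebra `λ`-bracket on `R` graded by `G`. -/
def IsLieConfSuper (G : ZMod 2 → Submodule ℂ R) (q : R → R → VP r R) : Prop :=
  Bilin r R q ∧ ParityPres r R G q ∧ Sesq r R q ∧ Skew r R G q ∧ Jacobi r R G q

/-- Left Novikov conformal identity
`(a_λ b)_{λ+μ} c - a_λ (b_μ c) = (-1)^{αβ} ((b_μ a)_{λ+μ} c - b_μ (a_λ c))`. -/
def NovLeft1 (G : ZMod 2 → Submodule ℂ R) (p : R → R → VP r R) : Prop :=
  ∀ (α β : ZMod 2) (a b c : R), a ∈ G α → b ∈ G β →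
    evL r R p (FLM r R) (ev r R (FL r R) (p a b)) c -
      evR r R p (FL r R) a (ev r R (FM r R) (p b c)) =
    sgn α β • (evL r R p (FLM r R) (ev r R (FM r R) (p b a)) c -
      evR r R p (FM r R) b (ev r R (FL r R) (p a c)))

/-- Left Novikov conformal identity `(a_λ b)_{λ+μ} c = (-1)^{βγ} (a_λ c)_{-μ-T} b`. -/
def NovLeft2 (G : ZMod 2 → Submodule ℂ R) (p : R → R → VP r R) : Prop :=
  ∀ (β γ : ZMod 2) (a b c : R), b ∈ G β → c ∈ G γ →
    evL r R p (FLM r R) (ev r R (FL r R) (p a b)) c =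
      sgn β γ • evL r R p (FNM r R) (ev r R (FL r R) (p a c)) b

/-- `p` is an `r`-dimensional (left) Novikov conformal superalgebra `λ`-product. -/
def IsNovLeft (G : ZMod 2 → Submodule ℂ R) (p : R → R → VP r R) : Prop :=
  Bilin r R p ∧ ParityPres r R G p ∧ Sesq r R p ∧ NovLeft1 r R G p ∧ NovLeft2 r R G p

/-- Right Novikov conformal identity
`a_λ (b_μ c) - (a_λ b)_{λ+μ} c = (-1)^{βγ} (a_λ (c_{-μ-T} b) - (a_λ c)_{-μ-T} b)`. -/
def NovRight1 (G : ZMod 2 → Submodule ℂ R) (p : R → R → VP r R) : Prop :=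
  ∀ (β γ : ZMod 2) (a b c : R), b ∈ G β → c ∈ G γ →
    evR r R p (FL r R) a (ev r R (FM r R) (p b c)) -
      evL r R p (FLM r R) (ev r R (FL r R) (p a b)) c =
    sgn β γ • (evR r R p (FL r R) a (ev r R (FNM r R) (p c b)) -
      evL r R p (FNM r R) (ev r R (FL r R) (p a c)) b)

/-- Right Novikov conformal identity `a_λ (b_μ c) = (-1)^{αβ} b_μ (a_λ c)`. -/
def NovRight2 (G : ZMod 2 → Submodule ℂ R) (p : R → R → VP r R) : Prop :=
  ∀ (α β : ZMod 2) (a b c : R), a ∈ G α → b ∈ G β →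
    evR r R p (FL r R) a (ev r R (FM r R) (p b c)) =
      sgn α β • evR r R p (FM r R) b (ev r R (FL r R) (p a c))

/-- `p` is an `r`-dimensional right Novikov conformal superalgebra `λ`-product. -/
def IsNovRight (G : ZMod 2 → Submodule ℂ R) (p : R → R → VP r R) : Prop :=
  Bilin r R p ∧ ParityPres r R G p ∧ Sesq r R p ∧ NovRight1 r R G p ∧ NovRight2 r R G p

/-- The compatibility condition of a super Gel'fand-Dorfman conformal bialgebra:
`[(a_{-μ-T} b)_{-λ-T} c] + [a_{-μ-T} b]_{-λ-T} c - a_{-λ-μ-T} [b_{-λ-T} c]`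
`- (-1)^{βγ} [(a_{-λ-T} c)_{-μ-T} b] - (-1)^{βγ} [a_{-λ-T} c]_{-μ-T} b = 0`. -/
def GDCompat (G : ZMod 2 → Submodule ℂ R) (p q : R → R → VP r R) : Prop :=
  ∀ (β γ : ZMod 2) (a b c : R), b ∈ G β → c ∈ G γ →
    evL r R q (FNL r R) (ev r R (FNM r R) (p a b)) c +
    evL r R p (FNL r R) (ev r R (FNM r R) (q a b)) c -
    evR r R p (FNLM r R) a (ev r R (FNL r R) (q b c)) -
    sgn β γ • evL r R q (FNM r R) (ev r R (FNL r R) (p a c)) b -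
    sgn β γ • evL r R p (FNM r R) (ev r R (FNL r R) (q a c)) b = 0

/-- `(R, p, q)` is an `r`-dimensional super Gel'fand-Dorfman conformal bialgebra. -/
def IsGDConf (G : ZMod 2 → Submodule ℂ R) (p q : R → R → VP r R) : Prop :=
  IsNovLeft r R G p ∧ IsLieConfSuper r R G q ∧ GDCompat r R G p q

/-! Ungraded (purely even) versions. -/

def Skew' (q : R → R → VP r R) : Prop :=
  ∀ a b : R, q a b = -(vNeg r R (q b a))

def Jacobi' (q : R → R → VP r R) : Prop :=
  ∀ a b c : R,
    evR r R q (FL r R) a (ev r R (FM r R) (q b c)) =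
      evL r R q (FLM r R) (ev r R (FL r R) (q a b)) c +
      evR r R q (FM r R) b (ev r R (FL r R) (q a c))

/-- `q` is an `r`-dimensional Lie conformal algebra `λ`-bracket on `R`. -/
def IsLieConf' (q : R → R → VP r R) : Prop :=
  Bilin r R q ∧ Sesq r R q ∧ Skew' r R q ∧ Jacobi' r R q

def NovLeft1' (p : R → R → VP r R) : Prop :=
  ∀ a b c : R,
    evL r R p (FLM r R) (ev r R (FL r R) (p a b)) c -
      evR r R p (FL r R) a (ev r R (FM r R) (p b c)) =
    evL r R p (FLM r R) (ev r R (FM r R) (p b a)) c -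
      evR r R p (FM r R) b (ev r R (FL r R) (p a c))

def NovLeft2' (p : R → R → VP r R) : Prop :=
  ∀ a b c : R,
    evL r R p (FLM r R) (ev r R (FL r R) (p a b)) c =
      evL r R p (FNM r R) (ev r R (FL r R) (p a c)) b

/-- `p` is an `r`-dimensional (left) Novikov conformal algebra `λ`-product. -/
def IsNovLeft' (p : R → R → VP r R) : Prop :=
  Bilin r R p ∧ Sesq r R p ∧ NovLeft1' r R p ∧ NovLeft2' r R p

def GDCompat' (p q : R → R → VP r R) : Prop :=
  ∀ a b c : R,
    evL r R q (FNL r R) (ev r R (FNM r R) (p a b)) c +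
    evL r R p (FNL r R) (ev r R (FNM r R) (q a b)) c -
    evR r R p (FNLM r R) a (ev r R (FNL r R) (q b c)) -
    evL r R q (FNM r R) (ev r R (FNL r R) (p a c)) b -
    evL r R p (FNM r R) (ev r R (FNL r R) (q a c)) b = 0

/-- `(R, p, q)` is an `r`-dimensional Gel'fand-Dorfman conformal bialgebra. -/
def IsGDConf' (p q : R → R → VP r R) : Prop :=
  IsNovLeft' r R p ∧ IsLieConf' r R q ∧ GDCompat' r R p q

end

/-! Ordinary (non-conformal) structures on a complex vector space. -/

noncomputable section

variable (V : Type*) [AddCommGroup V] [Module ℂ V]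

/-- `ℂ`-bilinearity of an ordinary product. -/
def BilinV (m : V → V → V) : Prop :=
  (∀ a b c : V, m (a + b) c = m a c + m b c) ∧
  (∀ a b c : V, m a (b + c) = m a b + m a c) ∧
  (∀ (z : ℂ) (a b : V), m (z • a) b = z • m a b) ∧
  (∀ (z : ℂ) (a b : V), m a (z • b) = z • m a b)

def ParityPresV (G : ZMod 2 → Submodule ℂ V) (m : V → V → V) : Prop :=
  ∀ (α β : ZMod 2) (a b : V), a ∈ G α → b ∈ G β → m a b ∈ G (α + β)

/-- `br` is a Lie superalgebra bracket on `V` graded by `G`. -/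
def IsLieSuper (G : ZMod 2 → Submodule ℂ V) (br : V → V → V) : Prop :=
  BilinV V br ∧ ParityPresV V G br ∧
  (∀ (α β : ZMod 2) (a b : V), a ∈ G α → b ∈ G β → br a b = -(sgn α β • br b a)) ∧
  (∀ (α β : ZMod 2) (a b : V), a ∈ G α → b ∈ G β → ∀ c : V,
    br a (br b c) = br (br a b) c + sgn α β • br b (br a c))

/-- `m` is a (left) Novikov superalgebra product on `V` graded by `G`. -/
def IsNovSuper (G : ZMod 2 → Submodule ℂ V) (m : V → V → V) : Prop :=
  BilinV V m ∧ ParityPresV V G m ∧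
  (∀ (β γ : ZMod 2) (b c : V), b ∈ G β → c ∈ G γ → ∀ a : V,
    m (m a b) c = sgn β γ • m (m a c) b) ∧
  (∀ (α β : ZMod 2) (a b : V), a ∈ G α → b ∈ G β → ∀ c : V,
    m (m a b) c - m a (m b c) = sgn α β • (m (m b a) c - m b (m a c)))

/-- `m` is a supercommutative associative product on `V` graded by `G`. -/
def IsCommAssocSuper (G : ZMod 2 → Submodule ℂ V) (m : V → V → V) : Prop :=
  BilinV V m ∧ ParityPresV V G m ∧
  (∀ (α β : ZMod 2) (a b : V), a ∈ G α → b ∈ G β → m a b = sgn α β • m b a) ∧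
  (∀ a b c : V, m (m a b) c = m a (m b c))

/-- `(V, m, dot)` is a Novikov-Poisson superalgebra. -/
def IsNovPoissonSuper (G : ZMod 2 → Submodule ℂ V) (m dot : V → V → V) : Prop :=
  IsNovSuper V G m ∧ IsCommAssocSuper V G dot ∧
  (∀ (α β : ZMod 2) (a b : V), a ∈ G α → b ∈ G β → ∀ c : V,
    dot (m a b) c - m a (dot b c) = sgn α β • (dot (m b a) c - m b (dot a c))) ∧
  (∀ a b c : V, m (dot a b) c = dot a (m b c))

/-- `(V, br, m)` is a super Gel'fand-Dorfman bialgebra. -/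
def IsGDSuper (G : ZMod 2 → Submodule ℂ V) (br m : V → V → V) : Prop :=
  IsLieSuper V G br ∧ IsNovSuper V G m ∧
  (∀ (β γ : ZMod 2) (b c : V), b ∈ G β → c ∈ G γ → ∀ a : V,
    br (m a b) c + m (br a b) c - m a (br b c) -
      sgn β γ • br (m a c) b - sgn β γ • m (br a c) b = 0)

/-- `br` is a Lie algebra bracket on `V`. -/
def IsLieAlg (br : V → V → V) : Prop :=
  BilinV V br ∧ (∀ a b : V, br a b = -br b a) ∧
  (∀ a b c : V, br a (br b c) = br (br a b) c + br b (br a c))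

/-- `m` is a (left) Novikov algebra product on `V`. -/
def IsNovAlg (m : V → V → V) : Prop :=
  BilinV V m ∧ (∀ a b c : V, m (m a b) c = m (m a c) b) ∧
  (∀ a b c : V, m (m a b) c - m a (m b c) = m (m b a) c - m b (m a c))

/-- `m` is a commutative associative product on `V`. -/
def IsCommAssoc (m : V → V → V) : Prop :=
  BilinV V m ∧ (∀ a b : V, m a b = m b a) ∧ (∀ a b c : V, m (m a b) c = m a (m b c))

/-- `(V, m, dot)` is a Novikov-Poisson algebra. -/
def IsNovPoisson (m dot : V → V → V) : Prop :=
  IsNovAlg V m ∧ IsCommAssoc V dot ∧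
  (∀ a b c : V, dot (m a b) c - m a (dot b c) = dot (m b a) c - m b (dot a c)) ∧
  (∀ a b c : V, m (dot a b) c = dot a (m b c))

/-- `(V, br, dot)` is a Lie-Poisson algebra. -/
def IsLiePoisson (br dot : V → V → V) : Prop :=
  IsLieAlg V br ∧ IsCommAssoc V dot ∧
  (∀ a b c : V, br a (dot b c) = dot (br a b) c + dot b (br a c))

/-- `(V, br, m)` is a Gel'fand-Dorfman bialgebra. -/
def IsGD (br m : V → V → V) : Prop :=
  IsLieAlg V br ∧ IsNovAlg V m ∧
  (∀ a b c : V,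
    br (m a b) c + m (br a b) c - m a (br b c) - br (m a c) b - m (br a c) b = 0)

end

/-! Free `ℂ[T₁,…,T_r]`-modules on a graded vector space. -/

noncomputable section

variable (r : ℕ) (V : Type*) [AddCommGroup V] [Module ℂ V]

/-- The free `ℂ[T₁,…,T_r]`-module `ℂ[T₁,…,T_r] ⊗ V` on the vector space `V`. -/
abbrev TR : Type _ := MvPolynomial (Fin r) ℂ ⊗[ℂ] V

/-- The embedding of `V` into `ℂ[T₁,…,T_r] ⊗ V`. -/
def ιT : V → TR r V := fun v => (1 : MvPolynomial (Fin r) ℂ) ⊗ₜ[ℂ] v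

/-- The grading of `ℂ[T₁,…,T_r] ⊗ V` induced by a grading of `V` (the `T`'s are even). -/
def TG (G : ZMod 2 → Submodule ℂ V) : ZMod 2 → Submodule ℂ (TR r V) := fun α =>
  Submodule.span ℂ {x : TR r V |
    ∃ (f : MvPolynomial (Fin r) ℂ) (v : V), v ∈ G α ∧ x = f ⊗ₜ[ℂ] v}

end

/-!
Expanding every `∗` into `∘` writes the left-hand side as a signed sum of twelve nested
products. Sesquilinearity moves the outer polynomial variables past the inner product, which
brings each of them to a normal form `Σ_k u^k (f v_k)(t)` whose outer and inner families `u`, `t`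
are integer combinations of `λ`, `μ`, `T`. The twelve normal forms cancel against
`a ∘_λ (b ∘_μ c) = (-1)^{αβ} b ∘_μ (a ∘_λ c)` and three instances of the other right Novikov
identity: at `(a, b, c)`, and at `(b, c, a)` and `(c, a, b)` after the substitutions
`(λ, μ) ↦ (μ, -λ-μ-T)` and `(λ, μ) ↦ (-λ-μ-T, λ)`. The coefficients agree because every sign
`(-1)^{αβ}` squares to `1`.
-/

noncomputable section

section OpMonomial

variable {n : ℕ} {M N : Type*} [AddCommMonoid M] [Module ℂ M] [AddCommMonoid N] [Module ℂ N]

def opMonomial (s : Fin n → Module.End ℂ M) (k : Fin n → ℕ) : Module.End ℂ M :=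
  (List.ofFn fun i => s i ^ k i).prod

lemma opMonomial_zero (s : Fin n → Module.End ℂ M) : opMonomial s 0 = 1 := by
  simp [opMonomial]

lemma commute_opMonomial {u : Module.End ℂ M} {s : Fin n → Module.End ℂ M}
    (h : ∀ i, Commute u (s i)) (k : Fin n → ℕ) : Commute u (opMonomial s k) :=
  Commute.list_prod_right _ _ fun _ hx => by
    obtain ⟨i, rfl⟩ := List.mem_ofFn.mp hx
    exact (h i).pow_right _

lemma opMonomial_add {s : Fin n → Module.End ℂ M} (h : ∀ i j, Commute (s i) (s j))
    (k e : Fin n → ℕ) : opMonomial s (k + e) = opMonomial s k * opMonomial s e := by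
  induction n with
  | zero => simp [opMonomial]
  | succ n ih =>
    have hc : Commute (s 0 ^ e 0) (opMonomial (fun i => s i.succ) fun i => k i.succ) :=
      commute_opMonomial (s := fun i => s i.succ) (fun i => (h 0 i.succ).pow_left _) _
    simp only [opMonomial, List.ofFn_succ, List.prod_cons, Pi.add_apply, pow_add] at ih ⊢
    rw [ih (fun i j => h _ _) (fun i => k i.succ) (fun i => e i.succ)]
    simp only [opMonomial] at hc
    rw [mul_assoc, ← mul_assoc (s 0 ^ e 0), hc.eq]
    noncomm_ring

lemma opMonomial_single (s : Fin n → Module.End ℂ M) (i : Fin n) :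
    opMonomial s (Pi.single i 1) = s i := by
  induction n with
  | zero => exact i.elim0
  | succ n ih =>
    simp only [opMonomial, List.ofFn_succ, List.prod_cons] at ih ⊢
    cases i using Fin.cases with
    | zero => simp
    | succ i =>
      simp only [Pi.single_apply, Fin.succ_inj] at ih ⊢
      simpa [(Fin.succ_ne_zero i).symm] using ih (fun j => s j.succ) i

lemma opMonomial_apply_intertwine (ψ : M → N) {s : Fin n → Module.End ℂ M}
    {t : Fin n → Module.End ℂ N} (h : ∀ i x, ψ (s i x) = t i (ψ x)) (k : Fin n → ℕ) (x : M) :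
    ψ (opMonomial s k x) = opMonomial t k (ψ x) := by
  induction n with
  | zero => simp [opMonomial]
  | succ n ih =>
    have hpow : ∀ m x, ψ ((s 0 ^ m) x) = (t 0 ^ m) (ψ x) := by
      intro m
      induction m with
      | zero => simp
      | succ m ihm => intro x; rw [pow_succ, pow_succ, Module.End.mul_apply,
          Module.End.mul_apply, ihm, h]
    simp only [opMonomial, List.ofFn_succ, List.prod_cons, Module.End.mul_apply] at ih ⊢
    rw [hpow, ih (fun i x => h i.succ x)]

end OpMonomial

def invtSubalgebra {M : Type*} [AddCommGroup M] [Module ℂ M] (P : Submodule ℂ M) :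
    Subalgebra ℂ (Module.End ℂ M) where
  carrier := {f | ∀ x ∈ P, f x ∈ P}
  mul_mem' hf hg x hx := hf _ (hg x hx)
  add_mem' hf hg x hx := P.add_mem (hf x hx) (hg x hx)
  algebraMap_mem' c _ hx := P.smul_mem c hx

section Shift

variable {r : ℕ} {R : Type*} [AddCommGroup R] [Module ℂ R]

lemma bShift_single (e a : (Fin r ⊕ Fin r) →₀ ℕ) (v : R) :
    bShift r R e (Finsupp.single a v) = Finsupp.single (a + e) v := by
  simp [bShift]

lemma bShift_mul (e f : (Fin r ⊕ Fin r) →₀ ℕ) :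
    bShift r R e * bShift r R f = bShift r R (e + f) :=
  Finsupp.lhom_ext fun a v => by
    simp [Module.End.mul_apply, bShift_single, add_assoc, add_comm f]

lemma bShift_zero : bShift r R 0 = 1 :=
  Finsupp.lhom_ext fun a v => by simp [bShift_single]

lemma commute_bShift_bShift (e f : (Fin r ⊕ Fin r) →₀ ℕ) :
    Commute (bShift r R e) (bShift r R f) := by
  rw [Commute, SemiconjBy, bShift_mul, bShift_mul, add_comm]

end Shift

section Families

variable {r : ℕ} {R : Type*} [AddCommGroup R] [Module ℂ R]
  [Module (MvPolynomial (Fin r) ℂ) R] [IsScalarTower ℂ (MvPolynomial (Fin r) ℂ) R]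

lemma bT_single (i : Fin r) (a : (Fin r ⊕ Fin r) →₀ ℕ) (v : R) :
    bT r R i (Finsupp.single a v) = Finsupp.single a ((X i : MvPolynomial (Fin r) ℂ) • v) := by
  simp [bT, tAct]

lemma commute_bShift_bT (e : (Fin r ⊕ Fin r) →₀ ℕ) (i : Fin r) :
    Commute (bShift r R e) (bT r R i) :=
  Finsupp.lhom_ext fun a v => by simp [Module.End.mul_apply, bShift_single, bT_single]

lemma commute_bT_bT (i j : Fin r) : Commute (bT r R i) (bT r R j) :=
  Finsupp.lhom_ext fun a v => by
    simp only [Module.End.mul_apply, bT_single, ← mul_smul, mul_comm (X i)]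

/-- Every family substituted below (`λ`, `μ`, `λ + μ`, `-μ - T`, `-λ - μ - T`, …) has this form,
so sesquilinearity and substitutions act on it through the coefficients `(a, b, c)`. -/
def linFam (a b c : ℤ) : Fin r → Module.End ℂ (BP r R) :=
  fun i => a • bLam r R i + b • bMu r R i + c • bT r R i

lemma linFam_apply (a b c : ℤ) (i : Fin r) (y : BP r R) :
    linFam a b c i y = a • bLam r R i y + b • bMu r R i y + c • bT r R i y := rfl

lemma commute_bShift_linFam (e : (Fin r ⊕ Fin r) →₀ ℕ) (a b c : ℤ) (i : Fin r) :
    Commute (bShift r R e) (linFam a b c i) :=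
  (((commute_bShift_bShift _ _).smul_right a).add_right
    ((commute_bShift_bShift _ _).smul_right b)).add_right
    ((commute_bShift_bT e i).smul_right c)

lemma commute_bT_linFam (j : Fin r) (a b c : ℤ) (i : Fin r) :
    Commute (bT r R j) (linFam a b c i) :=
  ((((commute_bShift_bT _ j).symm.smul_right a).add_right
    ((commute_bShift_bT _ j).symm.smul_right b)).add_right
    ((commute_bT_bT j i).smul_right c))

lemma commute_linFam_linFam (a b c a' b' c' : ℤ) (i j : Fin r) :
    Commute (linFam (R := R) a b c i) (linFam a' b' c' j) :=
  ((((commute_bShift_linFam _ a' b' c' j).smul_left a).add_left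
    ((commute_bShift_linFam _ a' b' c' j).smul_left b)).add_left
    ((commute_bT_linFam i a' b' c' j).smul_left c))

lemma FL_eq : FL r R = linFam 1 0 0 := by ext1 i; simp [FL, linFam]
lemma FM_eq : FM r R = linFam 0 1 0 := by ext1 i; simp [FM, linFam]
lemma FLM_eq : FLM r R = linFam 1 1 0 := by ext1 i; simp [FLM, linFam]
lemma FNM_eq : FNM r R = linFam 0 (-1) (-1) := by ext1 i; simp [FNM, linFam, sub_eq_add_neg]

lemma neg_linFam_sub_bT (a b c : ℤ) (i : Fin r) :
    -linFam (R := R) a b c i - bT r R i = linFam (-a) (-b) (-c - 1) i := by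
  simp only [linFam]
  module

end Families

section Evaluation

variable {r : ℕ} {R : Type*} [AddCommGroup R] [Module ℂ R]

def evₗ (t : Fin r → Module.End ℂ (BP r R)) : VP r R →ₗ[ℂ] BP r R :=
  Finsupp.lsum ℂ fun k => opMonomial t k ∘ₗ Finsupp.lsingle 0

lemma evₗ_apply (t : Fin r → Module.End ℂ (BP r R)) (F : VP r R) : evₗ t F = ev r R t F := rfl

lemma ev_single (t : Fin r → Module.End ℂ (BP r R)) (k : Fin r →₀ ℕ) (v : R) :
    ev r R t (Finsupp.single k v) = opMonomial t k (Finsupp.single 0 v) := by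
  simp [← evₗ_apply, evₗ]

lemma ev_single_zero (t : Fin r → Module.End ℂ (BP r R)) (v : R) :
    ev r R t (Finsupp.single 0 v) = Finsupp.single 0 v := by
  simp [ev_single, opMonomial_zero]

lemma vLam_single (i : Fin r) (k : Fin r →₀ ℕ) (v : R) :
    vLam r R i (Finsupp.single k v) = Finsupp.single (k + Finsupp.single i 1) v := by
  simp [vLam]

lemma ev_vLam {t : Fin r → Module.End ℂ (BP r R)} (ht : ∀ i j, Commute (t i) (t j))
    (i : Fin r) (F : VP r R) : ev r R t (vLam r R i F) = t i (ev r R t F) := by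
  simp only [← evₗ_apply, ← LinearMap.comp_apply]
  congr 1
  refine Finsupp.lhom_ext fun k v => ?_
  simp only [LinearMap.comp_apply, evₗ_apply, vLam_single, ev_single, Finsupp.coe_add,
    Finsupp.single_eq_pi_single, opMonomial_add ht, opMonomial_single]
  rw [← (commute_opMonomial (fun j => ht i j) _).eq, Module.End.mul_apply]

variable [Module (MvPolynomial (Fin r) ℂ) R] [IsScalarTower ℂ (MvPolynomial (Fin r) ℂ) R]

lemma vT_single (i : Fin r) (k : Fin r →₀ ℕ) (v : R) :
    vT r R i (Finsupp.single k v) = Finsupp.single k ((X i : MvPolynomial (Fin r) ℂ) • v) := by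
  simp [vT, tAct]

lemma ev_vT {t : Fin r → Module.End ℂ (BP r R)} (ht : ∀ i j, Commute (bT r R i) (t j))
    (i : Fin r) (F : VP r R) : ev r R t (vT r R i F) = bT r R i (ev r R t F) := by
  simp only [← evₗ_apply, ← LinearMap.comp_apply]
  congr 1
  refine Finsupp.lhom_ext fun k v => ?_
  simp only [LinearMap.comp_apply, evₗ_apply, vT_single, ev_single, ← bT_single]
  rw [← Module.End.mul_apply, ← (commute_opMonomial (fun j => ht i j) _).eq, Module.End.mul_apply]

lemma ev_vNeg {t : Fin r → Module.End ℂ (BP r R)} (ht : ∀ i j, Commute (t i) (t j))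
    (hTt : ∀ i j, Commute (bT r R i) (t j)) (F : VP r R) :
    ev r R t (vNeg r R F) = ev r R (fun i => -t i - bT r R i) F := by
  have hint (i : Fin r) (x : VP r R) :
      ev r R t ((-vLam r R i - vT r R i) x) = (-t i - bT r R i) (ev r R t x) := by
    simp only [LinearMap.sub_apply, LinearMap.neg_apply, ← evₗ_apply, map_sub, map_neg]
    simp only [evₗ_apply, ev_vLam ht, ev_vT hTt]
  simp only [vNeg, ← evₗ_apply, map_finsuppSum]
  refine Finsupp.sum_congr fun k _ => ?_
  rw [evₗ_apply]
  exact (opMonomial_apply_intertwine (ev r R t) hint k _).trans (by rw [ev_single_zero]; rfl)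

lemma ev_vNeg_linFam (a b c : ℤ) (F : VP r R) :
    ev r R (linFam a b c) (vNeg r R F) = ev r R (linFam (-a) (-b) (-c - 1)) F := by
  rw [ev_vNeg (commute_linFam_linFam _ _ _ _ _ _) (commute_bT_linFam · _ _ _)]
  simp only [neg_linFam_sub_bT]

end Evaluation

section Lift

variable {r : ℕ} {R : Type*} [AddCommGroup R] [Module ℂ R]

def Bilin.linearRight {p : R → R → VP r R} (hp : Bilin r R p) (x : R) : R →ₗ[ℂ] VP r R where
  toFun := p x
  map_add' := hp.2.1 x
  map_smul' z w := hp.2.2.2 z x w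

def Bilin.linearLeft {p : R → R → VP r R} (hp : Bilin r R p) (z : R) : R →ₗ[ℂ] VP r R where
  toFun w := p w z
  map_add' a b := hp.1 a b z
  map_smul' c w := hp.2.2.1 c w z

def liftEv (f : R →ₗ[ℂ] VP r R) (t : Fin r → Module.End ℂ (BP r R)) :
    Module.End ℂ (BP r R) :=
  Finsupp.lsum ℂ fun e => bShift r R e ∘ₗ evₗ t ∘ₗ f

lemma evR_eq_liftEv {p : R → R → VP r R} (hp : Bilin r R p) (t : Fin r → Module.End ℂ (BP r R))
    (x : R) (G : BP r R) : evR r R p t x G = liftEv (hp.linearRight x) t G := rfl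

lemma evL_eq_liftEv {p : R → R → VP r R} (hp : Bilin r R p) (t : Fin r → Module.End ℂ (BP r R))
    (z : R) (G : BP r R) : evL r R p t G z = liftEv (hp.linearLeft z) t G := rfl

lemma evR_add {p : R → R → VP r R} (hp : Bilin r R p) (t : Fin r → Module.End ℂ (BP r R))
    (x : R) (G G' : BP r R) : evR r R p t x (G + G') = evR r R p t x G + evR r R p t x G' := by
  simp only [evR_eq_liftEv hp, map_add]

lemma evR_zsmul {p : R → R → VP r R} (hp : Bilin r R p) (t : Fin r → Module.End ℂ (BP r R))
    (x : R) (n : ℤ) (G : BP r R) : evR r R p t x (n • G) = n • evR r R p t x G := by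
  simp only [evR_eq_liftEv hp, map_zsmul]

lemma evL_add {p : R → R → VP r R} (hp : Bilin r R p) (t : Fin r → Module.End ℂ (BP r R))
    (z : R) (G G' : BP r R) : evL r R p t (G + G') z = evL r R p t G z + evL r R p t G' z := by
  simp only [evL_eq_liftEv hp, map_add]

lemma evL_zsmul {p : R → R → VP r R} (hp : Bilin r R p) (t : Fin r → Module.End ℂ (BP r R))
    (z : R) (n : ℤ) (G : BP r R) : evL r R p t (n • G) z = n • evL r R p t G z := by
  simp only [evL_eq_liftEv hp, map_zsmul]

lemma liftEv_single (f : R →ₗ[ℂ] VP r R) (t : Fin r → Module.End ℂ (BP r R))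
    (e : (Fin r ⊕ Fin r) →₀ ℕ) (v : R) :
    liftEv f t (Finsupp.single e v) = bShift r R e (ev r R t (f v)) := by
  rw [liftEv, Finsupp.lsum_single]
  rfl

lemma liftEv_bShift (f : R →ₗ[ℂ] VP r R) (t : Fin r → Module.End ℂ (BP r R))
    (e : (Fin r ⊕ Fin r) →₀ ℕ) (G : BP r R) :
    liftEv f t (bShift r R e G) = bShift r R e (liftEv f t G) := by
  rw [← Module.End.mul_apply, ← Module.End.mul_apply]
  congr 1
  refine Finsupp.lhom_ext fun a v => ?_
  simp only [Module.End.mul_apply, bShift_single, liftEv_single, ← bShift_mul, add_comm a]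

/-- Normal form `Σ_k u^k (f v_k)(t)` of the nested products `x ∘_t F(u)` (`f = p x`) and
`F(u) ∘_t z` (`f = p · z`), where `F = Σ_k v_k λ^k`. -/
def evComp (f : R →ₗ[ℂ] VP r R) (u t : Fin r → Module.End ℂ (BP r R)) :
    VP r R →ₗ[ℂ] BP r R :=
  Finsupp.lsum ℂ fun k => opMonomial u k ∘ₗ evₗ t ∘ₗ f

lemma liftEv_ev {f : R →ₗ[ℂ] VP r R} {t u u' : Fin r → Module.End ℂ (BP r R)}
    (h : ∀ i y, liftEv f t (u i y) = u' i (liftEv f t y)) (F : VP r R) :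
    liftEv f t (ev r R u F) = evComp f u' t F := by
  rw [← evₗ_apply, ← LinearMap.comp_apply]
  congr 1
  refine Finsupp.lhom_ext fun k v => ?_
  simp only [LinearMap.comp_apply, evₗ_apply, ev_single,
    opMonomial_apply_intertwine (liftEv f t) h, liftEv_single, bShift_zero]
  rw [evComp, Finsupp.lsum_single]
  rfl

variable [Module (MvPolynomial (Fin r) ℂ) R] [IsScalarTower ℂ (MvPolynomial (Fin r) ℂ) R]

lemma liftEv_bT {f : R →ₗ[ℂ] VP r R} {i : Fin r} {m n : ℤ}
    (hf : ∀ w, f ((X i : MvPolynomial (Fin r) ℂ) • w) = m • vLam r R i (f w) + n • vT r R i (f w))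
    (a b c : ℤ) (G : BP r R) :
    liftEv f (linFam a b c) (bT r R i G) =
      m • linFam a b c i (liftEv f (linFam a b c) G) + n • bT r R i (liftEv f (linFam a b c) G) := by
  simp only [← Module.End.mul_apply, ← LinearMap.smul_apply, ← LinearMap.add_apply]
  congr 1
  refine Finsupp.lhom_ext fun e v => ?_
  simp only [LinearMap.add_apply, LinearMap.smul_apply, Module.End.mul_apply, bT_single,
    liftEv_single, hf, ← evₗ_apply, map_add, map_zsmul]
  simp only [evₗ_apply, ev_vLam (commute_linFam_linFam a b c a b c),
    ev_vT (commute_bT_linFam · a b c)]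
  simp only [← Module.End.mul_apply, (commute_bShift_linFam e a b c i).eq,
    (commute_bShift_bT e i).eq]

lemma liftEv_linFam {f : R →ₗ[ℂ] VP r R} {m n : ℤ}
    (hf : ∀ i w, f ((X i : MvPolynomial (Fin r) ℂ) • w) =
      m • vLam r R i (f w) + n • vT r R i (f w))
    (a b c a' b' c' : ℤ) (i : Fin r) (y : BP r R) :
    liftEv f (linFam a b c) (linFam a' b' c' i y) =
      linFam (a' + c' * m * a) (b' + c' * m * b) (c' * n + c' * m * c) i
        (liftEv f (linFam a b c) y) := by
  simp only [linFam_apply, map_add, map_zsmul, liftEv_bT (hf i)]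
  simp only [bLam, bMu, liftEv_bShift]
  module

variable {p : R → R → VP r R}

lemma evR_ev_linFam (hbil : Bilin r R p) (hses : Sesq r R p) (a b c a' b' c' : ℤ) (x : R)
    (F : VP r R) :
    evR r R p (linFam a b c) x (ev r R (linFam a' b' c') F) =
      evComp (hbil.linearRight x) (linFam (a' + c' * a) (b' + c' * b) (c' + c' * c))
        (linFam a b c) F := by
  have hf : ∀ i w, hbil.linearRight x ((X i : MvPolynomial (Fin r) ℂ) • w) =
      (1 : ℤ) • vLam r R i (hbil.linearRight x w) + (1 : ℤ) • vT r R i (hbil.linearRight x w) :=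
    fun i w => by simp [Bilin.linearRight, (hses i x w).2, add_comm]
  rw [evR_eq_liftEv hbil, liftEv_ev (liftEv_linFam hf a b c a' b' c')]
  simp

lemma evL_ev_linFam (hbil : Bilin r R p) (hses : Sesq r R p) (a b c a' b' c' : ℤ) (z : R)
    (F : VP r R) :
    evL r R p (linFam a b c) (ev r R (linFam a' b' c') F) z =
      evComp (hbil.linearLeft z) (linFam (a' - c' * a) (b' - c' * b) (-(c' * c)))
        (linFam a b c) F := by
  have hf : ∀ i w, hbil.linearLeft z ((X i : MvPolynomial (Fin r) ℂ) • w) =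
      (-1 : ℤ) • vLam r R i (hbil.linearLeft z w) + (0 : ℤ) • vT r R i (hbil.linearLeft z w) :=
    fun i w => by simp [Bilin.linearLeft, (hses i w z).1]
  rw [evL_eq_liftEv hbil, liftEv_ev (liftEv_linFam hf a b c a' b' c')]
  simp [sub_eq_add_neg]

end Lift

section Substitution

variable {r : ℕ} {R : Type*} [AddCommGroup R] [Module ℂ R]

def subst (σ τ : Fin r → Module.End ℂ (BP r R)) : Module.End ℂ (BP r R) :=
  Finsupp.lsum ℂ fun e =>
    (opMonomial σ (fun i => e (Sum.inl i)) * opMonomial τ (fun i => e (Sum.inr i))) ∘ₗ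
      Finsupp.lsingle 0

lemma subst_single (σ τ : Fin r → Module.End ℂ (BP r R)) (e : (Fin r ⊕ Fin r) →₀ ℕ) (v : R) :
    subst σ τ (Finsupp.single e v) =
      opMonomial σ (fun i => e (Sum.inl i)) (opMonomial τ (fun i => e (Sum.inr i))
        (Finsupp.single 0 v)) := by
  rw [subst, Finsupp.lsum_single]
  rfl

lemma subst_single_zero (σ τ : Fin r → Module.End ℂ (BP r R)) (v : R) :
    subst σ τ (Finsupp.single 0 v) = Finsupp.single 0 v := by
  simp [subst_single, opMonomial]

lemma subst_ev {σ τ t t' : Fin r → Module.End ℂ (BP r R)}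
    (h : ∀ i y, subst σ τ (t i y) = t' i (subst σ τ y)) (F : VP r R) :
    subst σ τ (ev r R t F) = ev r R t' F := by
  rw [← evₗ_apply, ← evₗ_apply, ← LinearMap.comp_apply]
  congr 1
  refine Finsupp.lhom_ext fun k v => ?_
  simp only [LinearMap.comp_apply, evₗ_apply, ev_single, opMonomial_apply_intertwine _ h,
    subst_single_zero]

lemma subst_evComp {σ τ t t' u u' : Fin r → Module.End ℂ (BP r R)}
    (hu : ∀ i y, subst σ τ (u i y) = u' i (subst σ τ y))
    (ht : ∀ i y, subst σ τ (t i y) = t' i (subst σ τ y)) (f : R →ₗ[ℂ] VP r R) (F : VP r R) :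
    subst σ τ (evComp f u t F) = evComp f u' t' F := by
  rw [← LinearMap.comp_apply]
  congr 1
  refine Finsupp.lhom_ext fun k v => ?_
  simp only [LinearMap.comp_apply, evComp, Finsupp.lsum_single, evₗ_apply,
    opMonomial_apply_intertwine _ hu, subst_ev ht]

variable [Module (MvPolynomial (Fin r) ℂ) R] [IsScalarTower ℂ (MvPolynomial (Fin r) ℂ) R]

lemma commute_opMonomial_linFam (a b c a' b' c' : ℤ) (k k' : Fin r → ℕ) :
    Commute (opMonomial (linFam (R := R) a b c) k) (opMonomial (linFam a' b' c') k') :=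
  commute_opMonomial (fun j =>
    (commute_opMonomial (fun i => commute_linFam_linFam a' b' c' a b c j i) k).symm) k'

lemma subst_bShift (a b c a' b' c' : ℤ) (e : (Fin r ⊕ Fin r) →₀ ℕ) (y : BP r R) :
    subst (linFam a b c) (linFam a' b' c') (bShift r R e y) =
      opMonomial (linFam a b c) (fun i => e (Sum.inl i))
        (opMonomial (linFam a' b' c') (fun i => e (Sum.inr i))
          (subst (linFam a b c) (linFam a' b' c') y)) := by
  simp only [← Module.End.mul_apply]
  congr 1
  refine Finsupp.lhom_ext fun g v => ?_
  have hadd (ι : Fin r → Fin r ⊕ Fin r) : (fun i => (g + e) (ι i)) =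
      (fun i => g (ι i)) + fun i => e (ι i) := rfl
  simp only [Module.End.mul_apply, bShift_single, subst_single, hadd,
    opMonomial_add (commute_linFam_linFam _ _ _ _ _ _)]
  simp only [← Module.End.mul_apply]
  have hc := commute_opMonomial_linFam (r := r) (R := R)
  rw [(hc a b c a b c (fun i => g (Sum.inl i)) (fun i => e (Sum.inl i))).left_comm,
    (hc a' b' c' a' b' c' (fun i => g (Sum.inr i)) (fun i => e (Sum.inr i))).eq,
    (hc a b c a' b' c' (fun i => g (Sum.inl i)) (fun i => e (Sum.inr i))).left_comm]

lemma subst_bLam (a b c a' b' c' : ℤ) (i : Fin r) (y : BP r R) :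
    subst (linFam a b c) (linFam a' b' c') (bLam r R i y) =
      linFam a b c i (subst (linFam a b c) (linFam a' b' c') y) := by
  have hL : (fun j => (Finsupp.single (Sum.inl i) 1 : (Fin r ⊕ Fin r) →₀ ℕ) (Sum.inl j)) =
      Pi.single i 1 := by
    ext j; simp [Finsupp.single_apply, Pi.single_apply, eq_comm]
  have hR : (fun j => (Finsupp.single (Sum.inl i) 1 : (Fin r ⊕ Fin r) →₀ ℕ) (Sum.inr j)) = 0 := by
    ext j; simp
  rw [bLam, subst_bShift, hL, hR, opMonomial_single, opMonomial_zero, Module.End.one_apply]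

lemma subst_bMu (a b c a' b' c' : ℤ) (i : Fin r) (y : BP r R) :
    subst (linFam a b c) (linFam a' b' c') (bMu r R i y) =
      linFam a' b' c' i (subst (linFam a b c) (linFam a' b' c') y) := by
  have hL : (fun j => (Finsupp.single (Sum.inr i) 1 : (Fin r ⊕ Fin r) →₀ ℕ) (Sum.inl j)) = 0 := by
    ext j; simp
  have hR : (fun j => (Finsupp.single (Sum.inr i) 1 : (Fin r ⊕ Fin r) →₀ ℕ) (Sum.inr j)) =
      Pi.single i 1 := by
    ext j; simp [Finsupp.single_apply, Pi.single_apply, eq_comm]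
  rw [bMu, subst_bShift, hL, hR, opMonomial_single, opMonomial_zero, Module.End.one_apply]

lemma subst_bT (a b c a' b' c' : ℤ) (i : Fin r) (y : BP r R) :
    subst (linFam a b c) (linFam a' b' c') (bT r R i y) =
      bT r R i (subst (linFam a b c) (linFam a' b' c') y) := by
  simp only [← Module.End.mul_apply]
  congr 1
  refine Finsupp.lhom_ext fun e v => ?_
  simp only [Module.End.mul_apply, bT_single, subst_single]
  simp only [← bT_single, ← Module.End.mul_apply, ← mul_assoc,
    (commute_opMonomial (commute_bT_linFam i a b c) _).eq]
  simp only [mul_assoc, (commute_opMonomial (commute_bT_linFam i a' b' c') _).eq]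

lemma subst_linFam (a b c a' b' c' a'' b'' c'' : ℤ) (i : Fin r) (y : BP r R) :
    subst (linFam a b c) (linFam a' b' c') (linFam a'' b'' c'' i y) =
      linFam (a'' * a + b'' * a') (a'' * b + b'' * b') (a'' * c + b'' * c' + c'') i
        (subst (linFam a b c) (linFam a' b' c') y) := by
  simp only [linFam_apply, map_add, map_zsmul, subst_bLam, subst_bMu, subst_bT]
  module

lemma subst_evComp_linFam (a b c a' b' c' u₁ u₂ u₃ t₁ t₂ t₃ : ℤ) (f : R →ₗ[ℂ] VP r R)
    (F : VP r R) :
    subst (linFam a b c) (linFam a' b' c') (evComp f (linFam u₁ u₂ u₃) (linFam t₁ t₂ t₃) F) =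
      evComp f (linFam (u₁ * a + u₂ * a') (u₁ * b + u₂ * b') (u₁ * c + u₂ * c' + u₃))
        (linFam (t₁ * a + t₂ * a') (t₁ * b + t₂ * b') (t₁ * c + t₂ * c' + t₃)) F :=
  subst_evComp (subst_linFam _ _ _ _ _ _ _ _ _) (subst_linFam _ _ _ _ _ _ _ _ _) f F

end Substitution

section Grading

variable {r : ℕ} {R : Type*} [AddCommGroup R] [Module ℂ R]

def coeffSubmodule (N : Submodule ℂ R) (κ : Type*) : Submodule ℂ (κ →₀ R) :=
  (Submodule.pi Set.univ fun _ => N).comap (Finsupp.lcoeFun (R := ℂ))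

lemma mem_coeffSubmodule {N : Submodule ℂ R} {κ : Type*} {F : κ →₀ R} :
    F ∈ coeffSubmodule N κ ↔ ∀ k, F k ∈ N := by
  simp [coeffSubmodule]

lemma single_mem_coeffSubmodule {N : Submodule ℂ R} {κ : Type*} (k : κ) {v : R} (hv : v ∈ N) :
    Finsupp.single k v ∈ coeffSubmodule N κ := by
  classical
  rw [mem_coeffSubmodule]
  intro j
  rw [Finsupp.single_apply]
  split_ifs
  exacts [hv, N.zero_mem]

lemma bShift_mem_invtSubalgebra (N : Submodule ℂ R) (e : (Fin r ⊕ Fin r) →₀ ℕ) :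
    bShift r R e ∈ invtSubalgebra (coeffSubmodule N _) := fun F hF =>
  Submodule.finsuppSum_mem ℂ _ F _ fun a _ =>
    single_mem_coeffSubmodule _ (mem_coeffSubmodule.mp hF a)

variable [Module (MvPolynomial (Fin r) ℂ) R] [IsScalarTower ℂ (MvPolynomial (Fin r) ℂ) R]

lemma linFam_mem_invtSubalgebra {N : Submodule ℂ R}
    (hN : ∀ i, ∀ v ∈ N, (X i : MvPolynomial (Fin r) ℂ) • v ∈ N) (a b c : ℤ) (i : Fin r) :
    linFam a b c i ∈ invtSubalgebra (coeffSubmodule N _) := by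
  have hT : bT r R i ∈ invtSubalgebra (coeffSubmodule N _) := fun F hF =>
    mem_coeffSubmodule.mpr fun k => hN i _ (mem_coeffSubmodule.mp hF k)
  exact add_mem (add_mem (zsmul_mem (bShift_mem_invtSubalgebra N _) a)
    (zsmul_mem (bShift_mem_invtSubalgebra N _) b)) (zsmul_mem hT c)

lemma ev_mem_coeffSubmodule {N : Submodule ℂ R}
    (hN : ∀ i, ∀ v ∈ N, (X i : MvPolynomial (Fin r) ℂ) • v ∈ N) (a b c : ℤ) {F : VP r R}
    (hF : ∀ k, F k ∈ N) : ev r R (linFam a b c) F ∈ coeffSubmodule N _ := by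
  refine Submodule.finsuppSum_mem ℂ _ F _ fun k _ => ?_
  have hmon : opMonomial (linFam a b c) k ∈ invtSubalgebra (coeffSubmodule N _) :=
    Subalgebra.list_prod_mem _ fun g hg => by
      obtain ⟨i, rfl⟩ := List.mem_ofFn.mp hg
      exact pow_mem (linFam_mem_invtSubalgebra hN a b c i) _
  exact hmon _ (single_mem_coeffSubmodule 0 (hF k))

end Grading

section Symmetrization

variable {r : ℕ} {R : Type*} [AddCommGroup R] [Module ℂ R]
  [Module (MvPolynomial (Fin r) ℂ) R] [IsScalarTower ℂ (MvPolynomial (Fin r) ℂ) R]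

def IsSymmetrization (G : ZMod 2 → Submodule ℂ R) (p s : R → R → VP r R) : Prop :=
  ∀ (α β : ZMod 2) (a b : R), a ∈ G α → b ∈ G β → s a b = p a b + sgn α β • vNeg r R (p b a)

variable {G : ZMod 2 → Submodule ℂ R} {p s : R → R → VP r R} {α β : ZMod 2}

lemma IsGraded.ev_mem (hG : IsGraded r R G) (a b c : ℤ) {F : VP r R} (hF : ∀ k, F k ∈ G α) :
    ev r R (linFam a b c) F ∈ coeffSubmodule (G α) _ :=
  ev_mem_coeffSubmodule (fun i v hv => hG.2 i α v hv) a b c hF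

lemma ev_star (hsym : IsSymmetrization G p s) {x y : R} (hx : x ∈ G α) (hy : y ∈ G β)
    (a b c : ℤ) :
    ev r R (linFam a b c) (s x y) =
      ev r R (linFam a b c) (p x y) + sgn α β • ev r R (linFam (-a) (-b) (-c - 1)) (p y x) := by
  rw [hsym α β x y hx hy, ← evₗ_apply, map_add, map_zsmul, evₗ_apply, evₗ_apply, ev_vNeg_linFam]

lemma evR_star (hsym : IsSymmetrization G p s) {x : R} (hx : x ∈ G α) {F : BP r R}
    (hF : F ∈ coeffSubmodule (G β) _) (a b c : ℤ) :
    evR r R s (linFam a b c) x F =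
      evR r R p (linFam a b c) x F + sgn α β • evL r R p (linFam (-a) (-b) (-c - 1)) F x := by
  simp only [evR, evL, Finsupp.smul_sum, ← Finsupp.sum_add]
  refine Finsupp.sum_congr fun e _ => ?_
  rw [ev_star hsym hx (mem_coeffSubmodule.mp hF e), map_add, map_zsmul]

lemma evL_star (hsym : IsSymmetrization G p s) {z : R} (hz : z ∈ G β) {F : BP r R}
    (hF : F ∈ coeffSubmodule (G α) _) (a b c : ℤ) :
    evL r R s (linFam a b c) F z =
      evL r R p (linFam a b c) F z + sgn α β • evR r R p (linFam (-a) (-b) (-c - 1)) z F := by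
  simp only [evR, evL, Finsupp.smul_sum, ← Finsupp.sum_add]
  refine Finsupp.sum_congr fun e _ => ?_
  rw [ev_star hsym (mem_coeffSubmodule.mp hF e) hz, map_add, map_zsmul]

end Symmetrization

end

/-- Let `(R, ∘_λ)` be an `r`-dimensional right Novikov conformal
superalgebra and define `a ∗_λ b = a ∘_λ b + (−1)^{αβ} b ∘_{−λ−T} a` on homogeneous
elements. Then for all homogeneous `a, b, c` (with `a, b` of parities `α, β`):
`a ∗_λ (b ∗_μ c) + 2 (a ∘_λ b) ∗_{λ+μ} c − (a ∗_λ b) ∗_{λ+μ} c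
  − (−1)^{αβ} b ∗_μ (a ∗_λ c) = 0`. -/
theorem statement_16 (r : ℕ) (R : Type*) [AddCommGroup R] [Module ℂ R]
    [Module (MvPolynomial (Fin r) ℂ) R] [IsScalarTower ℂ (MvPolynomial (Fin r) ℂ) R]
    (G : ZMod 2 → Submodule ℂ R) (hG : IsGraded r R G)
    (p : R → R → VP r R) (hp : IsNovRight r R G p)
    (s : R → R → VP r R) (hs : Bilin r R s)
    (hdef : ∀ (α β : ZMod 2) (a b : R), a ∈ G α → b ∈ G β →
      s a b = p a b + sgn α β • vNeg r R (p b a)) :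
    ∀ (α β γ : ZMod 2) (a b c : R), a ∈ G α → b ∈ G β → c ∈ G γ →
      evR r R s (FL r R) a (ev r R (FM r R) (s b c)) +
      (2 : ℤ) • evL r R s (FLM r R) (ev r R (FL r R) (p a b)) c -
      evL r R s (FLM r R) (ev r R (FL r R) (s a b)) c -
      sgn α β • evR r R s (FM r R) b (ev r R (FL r R) (s a c)) = 0 := by
  intro α β γ a b c ha hb hc
  obtain ⟨hbil, hpar, hses, hN1, hN2⟩ := hp
  have hcomm := hN2 α β a b c ha hb
  have habc := hN1 β γ a b c hb hc
  -- `(λ, μ) ↦ (μ, -λ-μ-T)`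
  have hbca := congrArg (subst (linFam 0 1 0) (linFam (-1) (-1) (-1))) (hN1 γ α b c a hc ha)
  -- `(λ, μ) ↦ (-λ-μ-T, λ)`
  have hcab := congrArg (subst (linFam (-1) (-1) (-1)) (linFam 1 0 0)) (hN1 α β c a b ha hb)
  simp only [FL_eq, FM_eq, FLM_eq, ev_star hdef hb hc, ev_star hdef ha hb, ev_star hdef ha hc,
    evR_add hs, evR_zsmul hs, evL_add hs, evL_zsmul hs]
  rw [evR_star hdef ha (hG.ev_mem _ _ _ (hpar β γ b c hb hc)),
    evR_star hdef ha (hG.ev_mem _ _ _ (hpar γ β c b hc hb)),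
    evL_star hdef hc (hG.ev_mem _ _ _ (hpar α β a b ha hb)),
    evL_star hdef hc (hG.ev_mem _ _ _ (hpar β α b a hb ha)),
    evR_star hdef hb (hG.ev_mem _ _ _ (hpar α γ a c ha hc)),
    evR_star hdef hb (hG.ev_mem _ _ _ (hpar γ α c a hc ha))]
  simp only [FL_eq, FM_eq, FLM_eq, FNM_eq, evR_ev_linFam hbil hses, evL_ev_linFam hbil hses,
    map_sub, map_zsmul, subst_evComp_linFam] at hcomm habc hbca hcab ⊢
  norm_num at hcomm habc hbca hcab ⊢
  linear_combination (norm := skip) (2 : ℤ) • hcomm - habc - (sgn α β * sgn α γ) • hbca +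
    (sgn α γ * sgn β γ) • hcab
  -- the coefficients are polynomials in the signs, which are `±1`: check every parity
  match_scalars <;> fin_cases α <;> fin_cases β <;> fin_cases γ <;> decide

end CA
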